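/- arXiv:2109.04856 — 2 statements merged into one kernel-verified Lean document; each statement's English description precedes it below -/
import Mathlib

section
/- Let B₁,…,B_N (N ≥ 1) be nonempty finite axis sets with union B̄, and let S̄ be a nonempty extrusion generated set associated to this collection, with projections S̄ᵢ := P[B̄→Bᵢ](S̄). Suppose for each i a set Ŝᵢ ⊆ S̄ᵢ is given, and suppose there exists at least one index j with Ŝⱼ strictly contained in S̄ⱼ. Then Ŝ := ⋂_{i=1}^N E[Bᵢ→B̄](Ŝᵢ) is strictly contained in S̄. -/
/-- A point over an axis set `B` (a finite subset of `ℕ`): an assignment of a real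
number to each coordinate in `B`. -/
abbrev Pt (B : Finset ℕ) : Type := {n : ℕ // n ∈ B} → ℝ

/-- Projection (restriction) of a single point over `B₂` onto a sub-axis-set `B₁ ⊆ B₂`. -/
def projPt {B₁ B₂ : Finset ℕ} (h : B₁ ⊆ B₂) (v : Pt B₂) : Pt B₁ :=
  fun x => v ⟨x.1, h x.2⟩

/-- Projection of a set of points over `B₂` onto `B₁ ⊆ B₂`. -/
def proj {B₁ B₂ : Finset ℕ} (h : B₁ ⊆ B₂) (V : Set (Pt B₂)) : Set (Pt B₁) :=
  projPt h '' V

/-- Extrusion of a set of points over `B₁` to the larger axis set `B₂ ⊇ B₁`. -/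
def extr {B₁ B₂ : Finset ℕ} (h : B₁ ⊆ B₂) (W : Set (Pt B₁)) : Set (Pt B₂) :=
  { v | projPt h v ∈ W }

/-- The union of the axis sets `B₁, …, B_N`. -/
def Bunion {N : ℕ} (B : Fin N → Finset ℕ) : Finset ℕ :=
  Finset.univ.biUnion B

lemma subset_Bunion {N : ℕ} (B : Fin N → Finset ℕ) (i : Fin N) : B i ⊆ Bunion B :=
  Finset.subset_biUnion_of_mem B (Finset.mem_univ i)

/-- The neighbourhood `Mᵢ = {j : Bᵢ ∩ Bⱼ ≠ ∅}` of node `i`. -/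
def Mset {N : ℕ} (B : Fin N → Finset ℕ) (i : Fin N) : Finset (Fin N) :=
  Finset.univ.filter (fun j => (B i ∩ B j).Nonempty)

/-- The axis set `B_{Mᵢ} = ⋃_{j ∈ Mᵢ} Bⱼ`. -/
def BMset {N : ℕ} (B : Fin N → Finset ℕ) (i : Fin N) : Finset ℕ :=
  (Mset B i).biUnion B

lemma subset_BMset {N : ℕ} (B : Fin N → Finset ℕ) {i j : Fin N} (h : j ∈ Mset B i) :
    B j ⊆ BMset B i :=
  Finset.subset_biUnion_of_mem B h

lemma self_mem_Mset {N : ℕ} {B : Fin N → Finset ℕ} {i : Fin N} (h : (B i).Nonempty) :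
    i ∈ Mset B i :=
  Finset.mem_filter.mpr ⟨Finset.mem_univ i, by rwa [Finset.inter_self]⟩

/-! An extrusion-generated set is the intersection of the extrusions of its own projections.
Since projection is left adjoint to extrusion, shrinking the projections shrinks the set; and if
`Ŝ` contained `S̄`, every projection `S̄ⱼ` would already lie in `Ŝⱼ`. -/

section Extrusion

variable {B₁ B₂ : Finset ℕ} (h : B₁ ⊆ B₂)

theorem proj_subset_iff {V : Set (Pt B₂)} {W : Set (Pt B₁)} : proj h V ⊆ W ↔ V ⊆ extr h W :=
  Set.image_subset_iff

theorem extr_mono {W W' : Set (Pt B₁)} (hW : W ⊆ W') : extr h W ⊆ extr h W' :=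
  Set.preimage_mono hW

end Extrusion

theorem iInter_extr_proj_iInter_extr {ι : Type*} {B : ι → Finset ℕ} {Bbar : Finset ℕ}
    (h : ∀ i, B i ⊆ Bbar) (S : (i : ι) → Set (Pt (B i))) :
    ⋂ i, extr (h i) (proj (h i) (⋂ j, extr (h j) (S j))) = ⋂ i, extr (h i) (S i) := by
  apply subset_antisymm
  · exact Set.iInter_mono fun i =>
      extr_mono (h i) ((proj_subset_iff (h i)).2 (Set.iInter_subset _ i))
  · exact Set.subset_iInter fun i => (proj_subset_iff (h i)).1 subset_rfl

theorem strict_subset_of_strict_proj_subset_general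
    {N : ℕ} (B : Fin N → Finset ℕ)
    (S : (i : Fin N) → Set (Pt (B i)))
    (Sbar : Set (Pt (Bunion B)))
    (hS : Sbar = ⋂ i, extr (subset_Bunion B i) (S i))
    (Shat : (i : Fin N) → Set (Pt (B i)))
    (hsub : ∀ i, Shat i ⊆ proj (subset_Bunion B i) Sbar)
    (hstrict : ∃ j, Shat j ⊂ proj (subset_Bunion B j) Sbar) :
    (⋂ i, extr (subset_Bunion B i) (Shat i)) ⊂ Sbar := by
  obtain ⟨j, -, hj⟩ := hstrict
  have hSbar : ⋂ i, extr (subset_Bunion B i) (proj (subset_Bunion B i) Sbar) = Sbar := by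
    rw [hS, iInter_extr_proj_iInter_extr]
  refine ⟨?_, fun hge => hj ((proj_subset_iff _).2 (hge.trans (Set.iInter_subset _ j)))⟩
  rw [← hSbar]
  exact Set.iInter_mono fun i => extr_mono _ (hsub i)

/-- Theorem 1, second part: if `S̄ ≠ ∅`, `Ŝᵢ ⊆ S̄ᵢ` for all `i`, and
`Ŝⱼ ⊂ S̄ⱼ` strictly for some `j`, then `Ŝ = ⋂ᵢ E[Bᵢ→B̄](Ŝᵢ) ⊂ S̄` strictly. -/
theorem strict_subset_of_strict_proj_subset
    {N : ℕ} (hN : 1 ≤ N) (B : Fin N → Finset ℕ)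
    (hBne : ∀ i, (B i).Nonempty)
    (S : (i : Fin N) → Set (Pt (B i)))
    (Sbar : Set (Pt (Bunion B)))
    (hS : Sbar = ⋂ i, extr (subset_Bunion B i) (S i))
    (hne : Sbar.Nonempty)
    (Shat : (i : Fin N) → Set (Pt (B i)))
    (hsub : ∀ i, Shat i ⊆ proj (subset_Bunion B i) Sbar)
    (hstrict : ∃ j, Shat j ⊂ proj (subset_Bunion B j) Sbar) :
    (⋂ i, extr (subset_Bunion B i) (Shat i)) ⊂ Sbar :=
  strict_subset_of_strict_proj_subset_general B S Sbar hS Shat hsub hstrict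
end

section
/- With the distributed iteration Sᵢ(κ+1) = P[B_{Mᵢ}→Bᵢ]( ⋂_{j∈Mᵢ} E[Bⱼ→B_{Mᵢ}](Sⱼ(κ)) ), started from arbitrary sets Sᵢ(0) of points over Bᵢ, define Sᵢ* := ⋂_{κ∈ℕ} Sᵢ(κ). Then for every index i one has the inclusion P[B_{Mᵢ}→Bᵢ]( ⋂_{j∈Mᵢ} E[Bⱼ→B_{Mᵢ}](Sⱼ*) ) ⊆ Sᵢ* (this is one inclusion of the fixed-point identity asserted for the limit sets Sᵢ* of the distributed algorithm). -/
/-!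
Both sides are built by the same monotone update. Since `Sⱼ* ⊆ Sⱼ(κ)` for all `j`, updating the
limits lands in `Sᵢ(κ + 1)`; and since `i ∈ Mᵢ`, the update of any family is contained in its
`i`-th member, which gives the case `κ = 0`.
-/

theorem proj_mono {B₁ B₂ : Finset ℕ} (h : B₁ ⊆ B₂) : Monotone (proj h) :=
  fun _ _ => Set.image_mono

theorem extr_mono_s5 {B₁ B₂ : Finset ℕ} (h : B₁ ⊆ B₂) : Monotone (extr h) :=
  fun _ _ hW _ hv => hW hv

theorem proj_extr_subset {B₁ B₂ : Finset ℕ} (h : B₁ ⊆ B₂) (W : Set (Pt B₁)) :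
    proj h (extr h W) ⊆ W :=
  Set.image_preimage_subset _ _

section Family

variable {ι : Type*} {C : ι → Finset ℕ} {B : Finset ℕ} (hC : ∀ j, C j ⊆ B)

theorem proj_iInter_extr_subset (T : (j : ι) → Set (Pt (C j))) (k : ι) :
    proj (hC k) (⋂ j, extr (hC j) (T j)) ⊆ T k :=
  (proj_mono (hC k) (Set.iInter_subset _ k)).trans (proj_extr_subset (hC k) (T k))

theorem proj_iInter_extr_mono {T T' : (j : ι) → Set (Pt (C j))} (hT : ∀ j, T j ⊆ T' j)
    (k : ι) : proj (hC k) (⋂ j, extr (hC j) (T j)) ⊆ proj (hC k) (⋂ j, extr (hC j) (T' j)) :=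
  proj_mono (hC k) (Set.iInter_mono fun j => extr_mono_s5 (hC j) (hT j))

end Family

theorem proj_iInter_extr_limit_subset_limit_general
    {N : ℕ} (B : Fin N → Finset ℕ)
    (hBne : ∀ i, (B i).Nonempty)
    (S : (i : Fin N) → ℕ → Set (Pt (B i)))
    (hiter : ∀ (i : Fin N) (κ : ℕ), S i (κ + 1) =
      proj (subset_BMset B (self_mem_Mset (hBne i)))
        (⋂ j : {j // j ∈ Mset B i}, extr (subset_BMset B j.2) (S j.1 κ)))
    (i : Fin N) :
    proj (subset_BMset B (self_mem_Mset (hBne i)))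
        (⋂ j : {j // j ∈ Mset B i}, extr (subset_BMset B j.2) (⋂ κ : ℕ, S j.1 κ))
      ⊆ ⋂ κ : ℕ, S i κ := by
  refine Set.subset_iInter fun κ => ?_
  cases κ with
  | zero =>
    exact (proj_iInter_extr_subset (fun j : {j // j ∈ Mset B i} => subset_BMset B j.2)
      (fun j => ⋂ κ, S j.1 κ) ⟨i, self_mem_Mset (hBne i)⟩).trans (Set.iInter_subset _ 0)
  | succ κ =>
    rw [hiter]
    exact proj_iInter_extr_mono (fun j : {j // j ∈ Mset B i} => subset_BMset B j.2)
      (fun j => Set.iInter_subset _ κ) ⟨i, self_mem_Mset (hBne i)⟩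

/-- Lemma 2, point i, one inclusion: with `Sᵢ* = ⋂_κ Sᵢ(κ)`, one has
`P[B_{Mᵢ}→Bᵢ](⋂_{j∈Mᵢ} E[Bⱼ→B_{Mᵢ}](Sⱼ*)) ⊆ Sᵢ*` for every `i`. -/
theorem proj_iInter_extr_limit_subset_limit
    {N : ℕ} (hN : 1 ≤ N) (B : Fin N → Finset ℕ)
    (hBne : ∀ i, (B i).Nonempty)
    (S : (i : Fin N) → ℕ → Set (Pt (B i)))
    (hiter : ∀ (i : Fin N) (κ : ℕ), S i (κ + 1) =
      proj (subset_BMset B (self_mem_Mset (hBne i)))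
        (⋂ j : {j // j ∈ Mset B i}, extr (subset_BMset B j.2) (S j.1 κ)))
    (i : Fin N) :
    proj (subset_BMset B (self_mem_Mset (hBne i)))
        (⋂ j : {j // j ∈ Mset B i}, extr (subset_BMset B j.2) (⋂ κ : ℕ, S j.1 κ))
      ⊆ ⋂ κ : ℕ, S i κ :=
  proj_iInter_extr_limit_subset_limit_general B hBne S hiter i
end
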